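/- arXiv:0708.2773 — 2 statements merged into one kernel-verified Lean document; each statement's English description precedes it below -/
import Mathlib

section
/- With Y_1,…,Y_n pairwise commuting linear vector fields on ℝⁿ such that D := det ℓ ≠ 0: if D factors as D = D₁D₂ with D₁, D₂ homogeneous polynomials without common divisor, then D₁ and D₂ are themselves joint eigenvectors of the Y_i, i.e. there exist constants λ_i, μ_i ∈ ℝ with Y_i D₁ = λ_i D₁, Y_i D₂ = μ_i D₂, and λ_i + μ_i = div Y_i for all i. -/
open MvPolynomial

/-- The action of the linear vector field `Y = Σ_{r,s} A r s • x_s ∂_r` on polynomials. -/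
noncomputable def linVF {n : ℕ} (A : Matrix (Fin n) (Fin n) ℝ)
    (P : MvPolynomial (Fin n) ℝ) : MvPolynomial (Fin n) ℝ :=
  ∑ r, (∑ s, C (A r s) * X s) * pderiv r P

/-- The matrix `ℓ` of coefficient linear forms of the vector fields `Y_i`. -/
noncomputable def coeffMat {n : ℕ} (a : Fin n → Matrix (Fin n) (Fin n) ℝ) :
    Matrix (Fin n) (Fin n) (MvPolynomial (Fin n) ℝ) :=
  fun i r => ∑ s, C (a i r s) * X s

/-!
Commutation of the `Y_i` forces the matrices `a i` to commute; then `Y_i` maps each column of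
`ℓ` to the combination of columns with constant coefficients `a i`, so `Y_i D = (tr a_i) D` by
the Leibniz rule for determinants. Hence `D₁ ∣ D₂ · Y_i D₁`, so `D₁ ∣ Y_i D₁` by coprimality,
and since `Y_i` preserves degrees, `Y_i D₁ = λ_i D₁`. Cancelling `D₁` in `Y_i D = (tr a_i) D`
gives `Y_i D₂ = (tr a_i - λ_i) D₂`.
-/

open Finset Matrix

namespace Derivation

variable {R A : Type*} [CommSemiring R] [CommRing A] [Algebra R A] (D : Derivation R A A)

theorem map_prod {ι : Type*} [DecidableEq ι] (s : Finset ι) (f : ι → A) :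
    D (∏ i ∈ s, f i) = ∑ i ∈ s, (∏ j ∈ s.erase i, f j) * D (f i) := by
  induction s using Finset.induction_on with
  | empty => simp
  | @insert b s hb ih =>
    rw [prod_insert hb, D.leibniz, smul_eq_mul, smul_eq_mul, ih, sum_insert hb,
      erase_insert hb, mul_sum, add_comm]
    congr 1
    refine sum_congr rfl fun i hi => ?_
    rw [erase_insert_of_ne (ne_of_mem_of_not_mem hi hb).symm,
      prod_insert fun hm => hb (mem_of_mem_erase hm)]
    ring

theorem map_det {ι : Type*} [Fintype ι] [DecidableEq ι] (M : Matrix ι ι A) :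
    D M.det = ∑ j, (M.updateCol j fun k => D (M k j)).det := by
  simp only [det_apply, map_sum, map_zsmul_unit, D.map_prod, smul_sum]
  rw [sum_comm]
  refine sum_congr rfl fun j _ => sum_congr rfl fun σ _ => ?_
  rw [← mul_prod_erase univ _ (mem_univ j), updateCol_self, mul_comm]
  congr 2
  exact prod_congr rfl fun i hi => (updateCol_ne (ne_of_mem_erase hi)).symm

theorem map_det_eq_trace_mul {ι : Type*} [Fintype ι] [DecidableEq ι] (M B : Matrix ι ι A)
    (h : ∀ k j, D (M k j) = ∑ l, B j l * M k l) : D M.det = B.trace * M.det := by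
  simp only [map_det, h, ← smul_eq_mul (a := B _ _), det_updateCol_sum, trace, sum_mul]
  rfl

theorem dvd_apply_of_isRelPrime [DecompositionMonoid A] {P Q : A} (hPQ : IsRelPrime P Q)
    (h : P * Q ∣ D (P * Q)) : P ∣ D P := by
  refine hPQ.dvd_of_dvd_mul_right ?_
  have hP : P ∣ D (P * Q) := dvd_trans (dvd_mul_right P Q) h
  rw [D.leibniz, smul_eq_mul, smul_eq_mul, mul_comm Q] at hP
  exact (dvd_add_right (dvd_mul_right P _)).1 hP

end Derivation

namespace MvPolynomial

theorem IsHomogeneous.exists_eq_C_mul_of_dvd {σ R : Type*} [CommRing R] [IsDomain R]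
    {P Q : MvPolynomial σ R} {k : ℕ} (hP : P.IsHomogeneous k) (hQ : Q.IsHomogeneous k)
    (hP0 : P ≠ 0) (hPQ : P ∣ Q) : ∃ c, Q = C c * P := by
  obtain ⟨S, rfl⟩ := hPQ
  rcases eq_or_ne S 0 with rfl | hS0
  · exact ⟨0, by simp⟩
  have hdeg : S.totalDegree = 0 := by
    have := totalDegree_mul_of_isDomain hP0 hS0
    rw [hQ.totalDegree (mul_ne_zero hP0 hS0), hP.totalDegree hP0] at this
    omega
  exact ⟨coeff 0 S, by rw [mul_comm, ← totalDegree_eq_zero_iff_eq_C.1 hdeg]⟩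

theorem exists_eigenvalues_of_isRelPrime {σ R : Type*} [CommRing R] [IsDomain R]
    [UniqueFactorizationMonoid R] (D : Derivation R (MvPolynomial σ R) (MvPolynomial σ R))
    {P Q : MvPolynomial σ R} {k : ℕ} {c : R} (hP : P.IsHomogeneous k)
    (hDP : (D P).IsHomogeneous k) (hP0 : P ≠ 0) (hPQ : IsRelPrime P Q)
    (h : D (P * Q) = C c * (P * Q)) : ∃ l, D P = C l * P ∧ D Q = C (c - l) * Q := by
  obtain ⟨l, hl⟩ := hP.exists_eq_C_mul_of_dvd hDP hP0
    (D.dvd_apply_of_isRelPrime hPQ ⟨C c, by rw [h, mul_comm]⟩)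
  refine ⟨l, hl, ?_⟩
  have hcancel : P * (D Q - C (c - l) * Q) = 0 := by
    rw [D.leibniz, smul_eq_mul, smul_eq_mul, hl] at h
    rw [map_sub]
    linear_combination h
  exact sub_eq_zero.1 ((mul_eq_zero.1 hcancel).resolve_left hP0)

variable {σ R : Type*} [Fintype σ] [CommSemiring R]

noncomputable def linForm (c : σ → R) : MvPolynomial σ R :=
  ∑ s, C (c s) * X s

theorem coeff_single_one_linForm (c : σ → R) (u : σ) :
    coeff (Finsupp.single u 1) (linForm c) = c u := by
  classical
  simp [linForm, coeff_sum, coeff_C_mul, coeff_X, Finsupp.single_eq_single_iff]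

theorem linForm_injective : Function.Injective (linForm : (σ → R) → MvPolynomial σ R) := by
  intro c d h
  funext u
  simpa only [coeff_single_one_linForm] using congrArg (coeff (Finsupp.single u 1)) h

theorem isHomogeneous_linForm (c : σ → R) : (linForm c).IsHomogeneous 1 :=
  IsHomogeneous.sum _ _ _ fun _ _ => isHomogeneous_C_mul_X _ _

theorem pderiv_linForm [DecidableEq σ] (c : σ → R) (r : σ) : pderiv r (linForm c) = C (c r) := by
  simp [linForm, Pi.single_apply]

theorem linForm_vecMul (c : σ → R) (B : Matrix σ σ R) :
    linForm (c ᵥ* B) = ∑ s, C (c s) * linForm (B s) := by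
  simp only [linForm, vecMul, dotProduct, map_sum, C_mul, mul_sum, sum_mul, mul_assoc]
  exact sum_comm

end MvPolynomial

section LinearVectorFields

variable {n : ℕ}

theorem coeffMat_apply (a : Fin n → Matrix (Fin n) (Fin n) ℝ) (k r : Fin n) :
    coeffMat a k r = linForm (a k r) :=
  rfl

theorem linVF_eq_sum (A : Matrix (Fin n) (Fin n) ℝ) (P : MvPolynomial (Fin n) ℝ) :
    linVF A P = ∑ r, linForm (A r) * pderiv r P :=
  rfl

theorem linVF_linForm (A : Matrix (Fin n) (Fin n) ℝ) (c : Fin n → ℝ) :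
    linVF A (linForm c) = linForm (c ᵥ* A) := by
  simp only [linVF_eq_sum, pderiv_linForm, linForm_vecMul, mul_comm (linForm _)]

theorem linVF_X (A : Matrix (Fin n) (Fin n) ℝ) (t : Fin n) : linVF A (X t) = linForm (A t) := by
  simp [linVF_eq_sum, pderiv_X, Pi.single_apply]

theorem commute_of_linVF_comm {A B : Matrix (Fin n) (Fin n) ℝ}
    (h : ∀ P, linVF A (linVF B P) = linVF B (linVF A P)) : Commute A B := by
  show A * B = B * A
  funext t
  simpa only [linVF_X, linVF_linForm, ← mul_apply_eq_vecMul, linForm_injective.eq_iff]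
    using (h (X t)).symm

theorem linVF_coeffMat {a : Fin n → Matrix (Fin n) (Fin n) ℝ} (hc : ∀ i j, Commute (a i) (a j))
    (i k r : Fin n) : linVF (a i) (coeffMat a k r) = ∑ s, C (a i r s) * coeffMat a k s := by
  rw [coeffMat_apply, linVF_linForm, ← mul_apply_eq_vecMul, (hc k i).eq, mul_apply_eq_vecMul,
    linForm_vecMul]
  rfl

noncomputable def linDer (A : Matrix (Fin n) (Fin n) ℝ) :
    Derivation ℝ (MvPolynomial (Fin n) ℝ) (MvPolynomial (Fin n) ℝ) :=
  ∑ r, linForm (A r) • pderiv r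

theorem coe_linDer (A : Matrix (Fin n) (Fin n) ℝ) : ⇑(linDer A) = linVF A := by
  funext P
  rw [linDer, linVF_eq_sum, ← Derivation.coeFnAddMonoidHom_apply, map_sum, Finset.sum_apply]
  rfl

theorem linVF_det_coeffMat {a : Fin n → Matrix (Fin n) (Fin n) ℝ}
    (hc : ∀ i j, Commute (a i) (a j)) (i : Fin n) :
    linVF (a i) (coeffMat a).det = C (a i).trace * (coeffMat a).det := by
  rw [← coe_linDer, (linDer (a i)).map_det_eq_trace_mul _ ((a i).map C), AddMonoidHom.map_trace]
  intro k r
  rw [coe_linDer, linVF_coeffMat hc]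
  rfl

theorem MvPolynomial.IsHomogeneous.linVF (A : Matrix (Fin n) (Fin n) ℝ)
    {P : MvPolynomial (Fin n) ℝ} {m : ℕ} (h : P.IsHomogeneous m) : (linVF A P).IsHomogeneous m := by
  rcases m with _ | m
  · rw [totalDegree_eq_zero_iff_eq_C.1 (Nat.le_zero.1 h.totalDegree_le)]
    simpa [linVF_eq_sum] using isHomogeneous_zero _ _ 0
  · rw [linVF_eq_sum]
    refine IsHomogeneous.sum _ _ _ fun r _ => ?_
    convert (isHomogeneous_linForm (A r)).mul h.pderiv using 1
    omega

end LinearVectorFields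

theorem factors_of_det_are_joint_eigenvectors_general {n n₁ : ℕ}
    (a : Fin n → Matrix (Fin n) (Fin n) ℝ)
    (hcomm : ∀ i j P, linVF (a i) (linVF (a j) P) = linVF (a j) (linVF (a i) P))
    (hD : (coeffMat a).det ≠ 0)
    (D₁ D₂ : MvPolynomial (Fin n) ℝ)
    (h₁ : D₁.IsHomogeneous n₁)
    (hfac : (coeffMat a).det = D₁ * D₂)
    (hcop : ∀ q : MvPolynomial (Fin n) ℝ, q ∣ D₁ → q ∣ D₂ → IsUnit q) :
    ∃ lam mu : Fin n → ℝ, ∀ i,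
      linVF (a i) D₁ = C (lam i) * D₁ ∧
      linVF (a i) D₂ = C (mu i) * D₂ ∧
      lam i + mu i = Matrix.trace (a i) := by
  have hc : ∀ i j, Commute (a i) (a j) := fun i j => commute_of_linVF_comm (hcomm i j)
  have hD₁ : D₁ ≠ 0 := left_ne_zero_of_mul (hfac ▸ hD)
  have heigen : ∀ i, ∃ l, linVF (a i) D₁ = C l * D₁ ∧
      linVF (a i) D₂ = C ((a i).trace - l) * D₂ := by
    intro i
    rw [← coe_linDer]
    refine exists_eigenvalues_of_isRelPrime (linDer (a i)) h₁ ?_ hD₁ hcop ?_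
    · rw [coe_linDer]
      exact h₁.linVF (a i)
    · rw [coe_linDer, ← hfac, linVF_det_coeffMat hc]
  choose lam hlam using heigen
  exact ⟨lam, fun i => (a i).trace - lam i,
    fun i => ⟨(hlam i).1, (hlam i).2, add_sub_cancel _ _⟩⟩

/-- If the determinant `D = det ℓ ≠ 0` of pairwise commuting linear vector fields factors
as `D = D₁ D₂` with `D₁, D₂` homogeneous without common divisor, then `D₁` and `D₂` are
joint eigenvectors of the `Y_i`, with eigenvalues summing to `div Y_i`. -/
theorem factors_of_det_are_joint_eigenvectors {n n₁ n₂ : ℕ} (hn : n₁ + n₂ = n)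
    (a : Fin n → Matrix (Fin n) (Fin n) ℝ)
    (hcomm : ∀ i j P, linVF (a i) (linVF (a j) P) = linVF (a j) (linVF (a i) P))
    (hD : (coeffMat a).det ≠ 0)
    (D₁ D₂ : MvPolynomial (Fin n) ℝ)
    (h₁ : D₁.IsHomogeneous n₁) (h₂ : D₂.IsHomogeneous n₂)
    (hfac : (coeffMat a).det = D₁ * D₂)
    (hcop : ∀ q : MvPolynomial (Fin n) ℝ, q ∣ D₁ → q ∣ D₂ → IsUnit q) :
    ∃ lam mu : Fin n → ℝ, ∀ i,
      linVF (a i) D₁ = C (lam i) * D₁ ∧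
      linVF (a i) D₂ = C (mu i) * D₂ ∧
      lam i + mu i = Matrix.trace (a i) :=
  factors_of_det_are_joint_eigenvectors_general a hcomm hD D₁ D₂ h₁ hfac hcop
end

section
/- Let X_1,…,X_n be pairwise commuting operators on a finite-dimensional complex vector space E, λ ∈ ℂⁿ, and assume that for every ℓ the space E decomposes as E = ker(X_ℓ − λ_ℓ id) ⊕ im(X_ℓ − λ_ℓ id). Then every cocycle of the Koszul complex K*(X−λ, E) is cohomologous to a cocycle with values in the joint kernel ∩_ℓ ker(X_ℓ − λ_ℓ id), i.e. to an element of (∩_ℓ ker(X_ℓ − λ_ℓ id)) ⊗ Λ. -/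
/-! Write `Y_l = X_l - λ_l` and let `π_l` be the projection onto `ker Y_l` along `im Y_l`.
Because `Y_l + π_l` is invertible and commutes with every `Y_k`, its inverse `Z_l` satisfies
`Y_l Z_l = 1 - π_l` and commutes with every `Y_k`. Contracting with the `l`-th coordinate,
`H_l = Z_l ⊗ ι_l` is a homotopy with `𝒦 H_l + H_l 𝒦 = (1 - π_l) ⊗ id`, so `π_l ⊗ id` moves a
cocycle only by a coboundary. The product of all `π_l` maps `E` into the joint kernel, and applying
it to a cocycle gives the required cohomologous cocycle. -/

/-- Creation operator `e_{η_l}` on the exterior algebra on `n` generators. -/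
noncomputable def creationOp (F : Type*) [Field F] (n : ℕ) (l : Fin n) :
    ExteriorAlgebra F (Fin n → F) →ₗ[F] ExteriorAlgebra F (Fin n → F) :=
  LinearMap.mulLeft F (ExteriorAlgebra.ι F (Pi.single l 1))

/-- The (total) Koszul differential `𝒦 = Σ_j (X_j − λ_j id) ⊗ e_{η_j}` on `E ⊗ Λℂⁿ`. -/
noncomputable def koszulOp {E : Type*} [AddCommGroup E] [Module ℂ E] (n : ℕ)
    (X : Fin n → Module.End ℂ E) (lam : Fin n → ℂ) :
    TensorProduct ℂ E (ExteriorAlgebra ℂ (Fin n → ℂ)) →ₗ[ℂ]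
      TensorProduct ℂ E (ExteriorAlgebra ℂ (Fin n → ℂ)) :=
  ∑ j, TensorProduct.map (X j - lam j • 1) (creationOp ℂ n j)

-- Asking `Q` to commute with `d` is what makes this closed under products.
def homotopicToOne {A : Type*} [Ring A] (d : A) : Submonoid A where
  carrier := {Q | Commute d Q ∧ ∃ h, 1 - Q = d * h + h * d}
  one_mem' := ⟨Commute.one_right d, 0, by simp⟩
  mul_mem' := by
    rintro Q₁ Q₂ ⟨hd₁, h₁, hh₁⟩ ⟨hd₂, h₂, hh₂⟩
    refine ⟨hd₁.mul_right hd₂, h₁ + Q₁ * h₂, ?_⟩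
    calc 1 - Q₁ * Q₂ = (1 - Q₁) + Q₁ * (1 - Q₂) := by noncomm_ring
      _ = d * (h₁ + Q₁ * h₂) + (h₁ + Q₁ * h₂) * d := by
        rw [hh₁, hh₂, mul_add, ← mul_assoc, ← hd₁.eq]; noncomm_ring

theorem sub_mem_range_of_mem_homotopicToOne {R M : Type*} [Ring R] [AddCommGroup M] [Module R M]
    {d Q : Module.End R M} (hQ : Q ∈ homotopicToOne d) {c : M} (hc : d c = 0) :
    c - Q c ∈ LinearMap.range d := by
  obtain ⟨-, h, hh⟩ := hQ
  refine ⟨h c, ?_⟩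
  simpa [hc] using (LinearMap.congr_fun hh c).symm

namespace Module.End

variable {K V : Type*} [Field K] [AddCommGroup V] [Module K V] {Y : Module.End K V}

theorem mul_projection_ker_range (h : IsCompl (LinearMap.ker Y) (LinearMap.range Y)) :
    Y * (LinearMap.ker Y).projection (LinearMap.range Y) h = 0 :=
  LinearMap.ext fun v => Submodule.projection_apply_mem h v

theorem projection_ker_range_mul (h : IsCompl (LinearMap.ker Y) (LinearMap.range Y)) :
    (LinearMap.ker Y).projection (LinearMap.range Y) h * Y = 0 :=
  LinearMap.ext fun v => Submodule.projection_apply_of_mem_right h (LinearMap.mem_range_self Y v)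

theorem commute_projection_ker_range (h : IsCompl (LinearMap.ker Y) (LinearMap.range Y))
    {T : Module.End K V} (hT : Commute T Y) :
    Commute T ((LinearMap.ker Y).projection (LinearMap.range Y) h) := by
  refine ((LinearMap.IsIdempotentElem.commute_iff
    (Submodule.isIdempotentElem_projection h)).mpr ⟨?_, ?_⟩).symm
  · rw [Submodule.range_projection]
    intro v hv
    simp only [Submodule.mem_comap, LinearMap.mem_ker] at hv ⊢
    rw [← Module.End.mul_apply, ← hT.eq, Module.End.mul_apply, hv, map_zero]
  · rw [Submodule.ker_projection]
    rintro _ ⟨v, rfl⟩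
    exact ⟨T v, LinearMap.congr_fun hT.eq.symm v⟩

theorem exists_mul_eq_one_sub_projection_ker_range [FiniteDimensional K V]
    (h : IsCompl (LinearMap.ker Y) (LinearMap.range Y)) :
    ∃ Z : Module.End K V, (∀ T, Commute T Y → Commute T Z) ∧
      Y * Z = 1 - (LinearMap.ker Y).projection (LinearMap.range Y) h := by
  set π := (LinearMap.ker Y).projection (LinearMap.range Y) h
  -- `Y π = π Y = 0`, so `Y + π` is injective and `π (Y + π) = π`.
  have hπ : π * (Y + π) = π := by
    rw [mul_add, projection_ker_range_mul, zero_add, (Submodule.isIdempotentElem_projection h).eq]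
  have hunit : IsUnit (Y + π) := by
    refine (LinearMap.isUnit_iff_ker_eq_bot _).mpr (LinearMap.ker_eq_bot'.mpr fun v hv => ?_)
    have hπv : π v = 0 := by simpa [hv] using (LinearMap.congr_fun hπ v).symm
    have hYv : v ∈ LinearMap.ker Y := by simpa [hπv] using hv
    rw [← Submodule.projection_apply_of_mem_left h hYv]
    exact hπv
  obtain ⟨u, hu⟩ := hunit
  refine ⟨↑u⁻¹, fun T hT => ?_, ?_⟩
  · exact (hu ▸ hT.add_right (commute_projection_ker_range h hT)).units_inv_right
  · have : π * ↑u⁻¹ = π := by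
      conv_lhs => rw [← hπ, ← hu, mul_assoc, u.mul_inv, mul_one]
    rw [eq_sub_iff_add_eq, ← this, ← add_mul, ← hu, u.mul_inv]

end Module.End

open TensorProduct

noncomputable def annihilationOp (n : ℕ) (l : Fin n) :
    Module.End ℂ (ExteriorAlgebra ℂ (Fin n → ℂ)) :=
  CliffordAlgebra.contractLeft (Q := (0 : QuadraticForm ℂ (Fin n → ℂ))) (LinearMap.proj l)

theorem annihilationOp_mul_creationOp_add (n : ℕ) (j l : Fin n) :
    annihilationOp n l * creationOp ℂ n j + creationOp ℂ n j * annihilationOp n l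
      = if j = l then 1 else 0 := by
  ext x
  split_ifs with hjl <;>
    simp [annihilationOp, creationOp, CliffordAlgebra.contractLeft_ι_mul, hjl]

section Koszul

variable {E : Type*} [AddCommGroup E] [Module ℂ E] {n : ℕ} {X : Fin n → Module.End ℂ E}
  {lam : Fin n → ℂ}

theorem commute_koszulOp_rTensor {P : Module.End ℂ E}
    (hP : ∀ j, Commute P (X j - lam j • 1)) :
    Commute (koszulOp n X lam) (P.rTensor (ExteriorAlgebra ℂ (Fin n → ℂ))) := by
  refine Commute.sum_left _ _ _ fun j _ => ?_
  simp only [Commute, SemiconjBy, LinearMap.rTensor, ← Module.End.one_eq_id,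
    ← TensorProduct.map_mul, (hP j).eq, mul_one, one_mul]

theorem koszulOp_mul_add_mul_koszulOp (a : Fin n) {Z : Module.End ℂ E}
    (hZ : ∀ j, Commute Z (X j - lam j • 1)) :
    koszulOp n X lam * map Z (annihilationOp n a) + map Z (annihilationOp n a) * koszulOp n X lam
      = ((X a - lam a • 1) * Z).rTensor (ExteriorAlgebra ℂ (Fin n → ℂ)) := by
  simp only [koszulOp, Finset.sum_mul, Finset.mul_sum, ← Finset.sum_add_distrib,
    ← TensorProduct.map_mul, (hZ _).eq, ← map_add_right, add_comm (creationOp ℂ n _ * _),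
    annihilationOp_mul_creationOp_add]
  simp [apply_ite (map _), LinearMap.rTensor, Module.End.one_eq_id]

variable [FiniteDimensional ℂ E]

theorem rTensor_projection_mem_homotopicToOne
    (hY : ∀ k l, Commute (X k - lam k • 1) (X l - lam l • 1)) (a : Fin n)
    (h : IsCompl (LinearMap.ker (X a - lam a • 1)) (LinearMap.range (X a - lam a • 1))) :
    ((LinearMap.ker (X a - lam a • 1)).projection (LinearMap.range (X a - lam a • 1)) h).rTensor
      (ExteriorAlgebra ℂ (Fin n → ℂ)) ∈ homotopicToOne (koszulOp n X lam) := by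
  obtain ⟨Z, hZ, hYZ⟩ := Module.End.exists_mul_eq_one_sub_projection_ker_range h
  refine ⟨commute_koszulOp_rTensor fun j =>
    (Module.End.commute_projection_ker_range h (hY j a)).symm, map Z (annihilationOp n a), ?_⟩
  rw [koszulOp_mul_add_mul_koszulOp a fun j => (hZ _ (hY j a)).symm, hYZ, LinearMap.rTensor_sub]
  exact congrArg (· - _) (LinearMap.rTensor_id _ _).symm

theorem exists_rTensor_mem_homotopicToOne_range_le_iInf_ker
    (hY : ∀ k l, Commute (X k - lam k • 1) (X l - lam l • 1))
    (hsupp : ∀ l, IsCompl (LinearMap.ker (X l - lam l • 1))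
      (LinearMap.range (X l - lam l • 1))) :
    ∃ P : Module.End ℂ E,
      P.rTensor (ExteriorAlgebra ℂ (Fin n → ℂ)) ∈ homotopicToOne (koszulOp n X lam) ∧
        LinearMap.range P ≤ ⨅ l, LinearMap.ker (X l - lam l • 1) := by
  suffices ∀ S : Finset (Fin n), ∃ P : Module.End ℂ E,
      P.rTensor (ExteriorAlgebra ℂ (Fin n → ℂ)) ∈ homotopicToOne (koszulOp n X lam) ∧
        ∀ l ∈ S, (X l - lam l • 1) * P = 0 by
    obtain ⟨P, hP, hPker⟩ := this Finset.univ
    refine ⟨P, hP, le_iInf fun l => ?_⟩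
    rintro _ ⟨v, rfl⟩
    exact LinearMap.congr_fun (hPker l (Finset.mem_univ l)) v
  intro S
  induction S using Finset.induction_on with
  | empty => exact ⟨LinearMap.id, by rw [LinearMap.rTensor_id]; exact one_mem _, by simp⟩
  | insert a S _ ih =>
    obtain ⟨P, hP, hPker⟩ := ih
    set π := (LinearMap.ker (X a - lam a • 1)).projection (LinearMap.range (X a - lam a • 1))
      (hsupp a)
    refine ⟨π * P, ?_, ?_⟩
    · rw [LinearMap.rTensor_mul]
      exact mul_mem (rTensor_projection_mem_homotopicToOne hY a (hsupp a)) hP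
    · intro l hl
      rcases Finset.mem_insert.mp hl with rfl | hl
      · rw [← mul_assoc, Module.End.mul_projection_ker_range, zero_mul]
      · rw [← mul_assoc, (Module.End.commute_projection_ker_range (hsupp a) (hY l a)).eq,
          mul_assoc, hPker l hl, mul_zero]

end Koszul

/-- If for each `l` the kernel and the image of `X_l − λ_l id` are supplementary in `E`,
then every Koszul cocycle is cohomologous to a cocycle with values in the joint kernel
`∩_l ker(X_l − λ_l id)`. -/
theorem koszul_cocycle_reduction_to_joint_kernel {E : Type*} [AddCommGroup E]
    [Module ℂ E] [FiniteDimensional ℂ E] (n : ℕ)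
    (X : Fin n → Module.End ℂ E)
    (hX : ∀ k l, X k * X l = X l * X k)
    (lam : Fin n → ℂ)
    (hsupp : ∀ l, IsCompl (LinearMap.ker (X l - lam l • 1))
      (LinearMap.range (X l - lam l • 1))) :
    ∀ c : TensorProduct ℂ E (ExteriorAlgebra ℂ (Fin n → ℂ)),
      koszulOp n X lam c = 0 →
      ∃ b, c - koszulOp n X lam b ∈
        LinearMap.range (TensorProduct.map
          (⨅ l, LinearMap.ker (X l - lam l • 1)).subtype
          (LinearMap.id (R := ℂ) (M := ExteriorAlgebra ℂ (Fin n → ℂ)))) := by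
  intro c hc
  have hY : ∀ k l, Commute (X k - lam k • 1) (X l - lam l • 1) := fun k l =>
    ((show Commute (X k) (X l) from hX k l).sub_right
      ((Commute.one_right _).smul_right _)).sub_left ((Commute.one_left _).smul_left _)
  obtain ⟨P, hP, hPker⟩ := exists_rTensor_mem_homotopicToOne_range_le_iInf_ker hY hsupp
  obtain ⟨b, hb⟩ := sub_mem_range_of_mem_homotopicToOne hP hc
  refine ⟨b, (LinearMap.codRestrict _ P fun v => hPker ⟨v, rfl⟩).rTensor _ c, ?_⟩
  rw [hb, sub_sub_cancel]
  change LinearMap.rTensor _ (⨅ l, LinearMap.ker (X l - lam l • 1)).subtype _ = _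
  rw [← LinearMap.rTensor_comp_apply, LinearMap.subtype_comp_codRestrict]
end
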